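/- arXiv:2211.00724 — 5 statements merged into one kernel-verified Lean document; each statement's English description precedes it below -/
import Mathlib

section
/- Let X be a set, O a measurable output space, and let M be a randomized algorithm mapping datasets in X^n to probability measures on O that is (ε,δ)-differentially private. Fix a dataset (X_1,…,X_n) and a measurable set G ⊆ O of good outputs, and suppose M(X_1,…,X_n) assigns probability at least 1−β to G. Then for every dataset (X_1',…,X_n') that differs from (X_1,…,X_n) in at most m entries, M(X_1',…,X_n') assigns probability at least 1 − e^{εm}(β + mδ) to G. In particular, taking m = ηn with η = O(min(log(1/β)/(εn), log(1/δ)/(εn + log n))), the mechanism outputs a good output with probability at least 1 − β^{Ω(1)} on any η-corrupted dataset. -/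
/-!
Group privacy: walking from `x` to `x'` through at most `m` neighbouring datasets, each step
multiplies the mass of a set by at most `e^ε` and adds at most `δ`, so the bad set `Gᶜ`, of mass
at most `β` under `x`, has mass at most `e^{εm}(β + mδ)` under `x'`.
-/

open MeasureTheory
open scoped ENNReal

noncomputable section

/-- Two datasets are neighbors if they differ in at most one entry. -/
def Neighbors {X : Type*} {n : ℕ} (a b : Fin n → X) : Prop :=
  ∃ i : Fin n, ∀ j, j ≠ i → a j = b j

/-- `(ε,δ)`-differential privacy for a randomized algorithm mapping datasets in `X^n`
to probability measures on a measurable output space `O`. -/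
def ApproxDP {X O : Type*} [MeasurableSpace O] {n : ℕ}
    (ε δ : ℝ) (M : (Fin n → X) → Measure O) : Prop :=
  ∀ a b, Neighbors a b → ∀ S : Set O, MeasurableSet S →
    M a S ≤ ENNReal.ofReal (Real.exp ε) * M b S + ENNReal.ofReal δ

theorem neighbors_update {X : Type*} {n : ℕ} (b : Fin n → X) (i : Fin n) (v : X) :
    Neighbors b (Function.update b i v) :=
  ⟨i, fun _ hj => (Function.update_of_ne hj v b).symm⟩

theorem setOf_ne_update_eq_diff {ι α : Type*} [DecidableEq ι] (a b : ι → α) (i : ι) :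
    {j | a j ≠ Function.update b i (a i) j} = {j | a j ≠ b j} \ {i} := by
  ext j
  rcases eq_or_ne j i with rfl | hji <;> simp [*]

theorem ncard_setOf_ne_update_lt {ι α : Type*} [Finite ι] [DecidableEq ι] {a b : ι → α} {i : ι}
    (hi : a i ≠ b i) :
    {j | a j ≠ Function.update b i (a i) j}.ncard < {j | a j ≠ b j}.ncard := by
  rw [setOf_ne_update_eq_diff]
  exact Set.ncard_sdiff_singleton_lt_of_mem hi

theorem MeasureTheory.prob_compl_le_ofReal_iff {Ω : Type*} [MeasurableSpace Ω] {μ : Measure Ω}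
    [IsProbabilityMeasure μ] {s : Set Ω} (hs : MeasurableSet s) {t : ℝ} (ht : 0 ≤ t) :
    μ sᶜ ≤ ENNReal.ofReal t ↔ ENNReal.ofReal (1 - t) ≤ μ s := by
  rw [ENNReal.ofReal_sub 1 ht, ENNReal.ofReal_one, ← compl_compl s,
    prob_compl_eq_one_sub hs.compl, compl_compl,
    ENNReal.sub_le_sub_iff_left prob_le_one ENNReal.one_ne_top]

namespace ApproxDP

variable {X O : Type*} [MeasurableSpace O] {n : ℕ} {M : (Fin n → X) → Measure O} {ε δ : ℝ}

theorem group_privacy (hDP : ApproxDP ε δ M) (hε : 0 ≤ ε) {S : Set O} (hS : MeasurableSet S)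
    (m : ℕ) {a b : Fin n → X} (hab : {j | a j ≠ b j}.ncard ≤ m) :
    M b S ≤ ENNReal.ofReal (Real.exp ε) ^ m * (M a S + m * ENNReal.ofReal δ) := by
  set E := ENNReal.ofReal (Real.exp ε)
  have hE : 1 ≤ E := ENNReal.one_le_ofReal.2 (Real.one_le_exp hε)
  induction m generalizing b with
  | zero =>
    rw [Nat.le_zero, Set.ncard_eq_zero] at hab
    obtain rfl : a = b := by
      simpa [Set.eq_empty_iff_forall_notMem, funext_iff] using hab
    simp
  | succ m ih =>
    by_cases hab_eq : a = b
    · subst hab_eq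
      calc M a S ≤ E ^ (m + 1) * M a S := le_mul_of_one_le_left zero_le (one_le_pow₀ hE)
        _ ≤ E ^ (m + 1) * (M a S + (m + 1 : ℕ) * ENNReal.ofReal δ) := by gcongr; exact le_self_add
    obtain ⟨i, hi⟩ : ∃ i, a i ≠ b i := by simpa [funext_iff] using hab_eq
    set c := Function.update b i (a i)
    have hac : {j | a j ≠ c j}.ncard ≤ m :=
      Nat.lt_succ_iff.1 ((ncard_setOf_ne_update_lt hi).trans_le hab)
    have hδ : ENNReal.ofReal δ ≤ E ^ (m + 1) * ENNReal.ofReal δ :=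
      le_mul_of_one_le_left zero_le (one_le_pow₀ hE)
    calc M b S ≤ E * M c S + ENNReal.ofReal δ := hDP b c (neighbors_update b i _) S hS
      _ ≤ E * (E ^ m * (M a S + m * ENNReal.ofReal δ)) + E ^ (m + 1) * ENNReal.ofReal δ := by
          gcongr
          exact ih hac
      _ = E ^ (m + 1) * (M a S + (m + 1 : ℕ) * ENNReal.ofReal δ) := by push_cast; ring

end ApproxDP

/-- Automatic robustness of `(ε,δ)`-DP mechanisms: if `M` is `(ε,δ)`-DP and puts mass at
least `1-β` on the good set `G` on input `x`, then on any input `x'` differing from `x` in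
at most `m` entries, `M` puts mass at least `1 - e^{εm}(β + mδ)` on `G`. -/
theorem stmt0 {X O : Type*} [MeasurableSpace O] {n : ℕ}
    (M : (Fin n → X) → Measure O) (hM : ∀ a, IsProbabilityMeasure (M a))
    (ε δ : ℝ) (hε : 0 ≤ ε) (hδ : 0 ≤ δ) (hDP : ApproxDP ε δ M)
    (x : Fin n → X) (G : Set O) (hG : MeasurableSet G)
    (β : ℝ) (hβ : 0 ≤ β) (hacc : ENNReal.ofReal (1 - β) ≤ M x G)
    (m : ℕ) (x' : Fin n → X)
    (hdiff : ({j : Fin n | x j ≠ x' j}).ncard ≤ m) :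
    ENNReal.ofReal (1 - Real.exp (ε * m) * (β + m * δ)) ≤ M x' G := by
  have hbad : M x Gᶜ ≤ ENNReal.ofReal β := (prob_compl_le_ofReal_iff hG hβ).2 hacc
  refine (prob_compl_le_ofReal_iff hG (by positivity)).1 ?_
  calc M x' Gᶜ ≤ ENNReal.ofReal (Real.exp ε) ^ m * (M x Gᶜ + m * ENNReal.ofReal δ) :=
        hDP.group_privacy hε hG.compl m hdiff
    _ ≤ ENNReal.ofReal (Real.exp ε) ^ m * (ENNReal.ofReal β + m * ENNReal.ofReal δ) := by
        gcongr
    _ = ENNReal.ofReal (Real.exp (ε * m) * (β + m * δ)) := by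
        rw [ENNReal.ofReal_mul (by positivity), ENNReal.ofReal_add hβ (by positivity),
          ENNReal.ofReal_mul (Nat.cast_nonneg m), ENNReal.ofReal_natCast,
          ← ENNReal.ofReal_pow (Real.exp_nonneg ε), ← Real.exp_nat_mul, mul_comm ε]
end
end

section
/- Let x, y ∈ ℝ^d with y having at most k nonzero coordinates, and let x' be obtained from x by keeping its k largest-magnitude coordinates and setting all other coordinates to zero (formally: x' = x restricted to a set T ⊆ {1,…,d} with |T| = k such that min_{i∈T} |x_i| ≥ max_{i∉T} |x_i|, and x'_i = 0 for i ∉ T). Then ‖x' − y‖₂ ≤ 4‖x − y‖₂. -/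
noncomputable section

/-- Sparsifying iterates: if `y` is `k`-sparse and `x'` keeps the `k` largest-magnitude
coordinates of `x` (zeroing the rest), then `‖x' - y‖₂ ≤ 4‖x - y‖₂`. -/
theorem stmt2 {d k : ℕ} (x y x' : EuclideanSpace ℝ (Fin d))
    (hy : (Finset.univ.filter fun i => y i ≠ 0).card ≤ k)
    (T : Finset (Fin d)) (hT : T.card = k)
    (hTtop : ∀ i ∈ T, ∀ j ∉ T, |x j| ≤ |x i|)
    (hx' : ∀ i, x' i = if i ∈ T then x i else 0) :
    ‖x' - y‖ ≤ 4 * ‖x - y‖ := by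
  classical
  set S : Finset (Fin d) := Finset.univ.filter fun i => y i ≠ 0 with hS
  set A : Finset (Fin d) := S \ T with hA
  set B : Finset (Fin d) := T \ S with hB
  set f : Fin d → ℝ := fun i => (x i - y i) ^ 2 with hf
  set g : Fin d → ℝ := fun i => (x' i - y i) ^ 2 with hg
  have hfnn : ∀ i, 0 ≤ f i := fun i => sq_nonneg _
  have hcardAB : A.card ≤ B.card := by
    have h1 := Finset.card_sdiff_add_card_inter S T
    have h2 := Finset.card_sdiff_add_card_inter T S
    have h3 : (T ∩ S).card = (S ∩ T).card := by rw [Finset.inter_comm]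
    have hScard : S.card ≤ k := hy
    rw [hA, hB]
    omega
  -- sum over T
  have hsumT : ∑ i ∈ T, g i = ∑ i ∈ T, f i := by
    apply Finset.sum_congr rfl
    intro i hi
    simp [hg, hf, hx' i, hi]
  -- sum over complement of T
  have hsumTc : ∑ i ∈ Tᶜ, g i = ∑ i ∈ A, (y i) ^ 2 := by
    have h1 : ∑ i ∈ Tᶜ, g i = ∑ i ∈ Tᶜ, (y i) ^ 2 := by
      apply Finset.sum_congr rfl
      intro i hi
      have : i ∉ T := by simpa using hi
      simp [hg, hx' i, this]
    rw [h1]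
    symm
    apply Finset.sum_subset
    · intro i hi
      simp only [hA, Finset.mem_sdiff] at hi
      simpa using hi.2
    · intro i hi hni
      have hiT : i ∉ T := by simpa using hi
      have : i ∉ S := fun hiS => hni (Finset.mem_sdiff.mpr ⟨hiS, hiT⟩)
      simp only [hS, Finset.mem_filter, Finset.mem_univ, true_and, not_not] at this
      simp [this]
  -- the key bound on ∑_A x²
  have hAx : ∑ i ∈ A, (x i) ^ 2 ≤ ∑ j ∈ B, f j := by
    rcases A.eq_empty_or_nonempty with hAe | hAne
    · rw [hAe]
      simp
      exact Finset.sum_nonneg fun j _ => hfnn j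
    · have hBne : B.Nonempty := by
        rw [← Finset.card_pos] at hAne ⊢
        omega
      obtain ⟨j₀, hj₀B, hj₀min⟩ := B.exists_min_image (fun j => (x j) ^ 2) hBne
      have hj₀T : j₀ ∈ T := (Finset.mem_sdiff.mp hj₀B).1
      have step1 : ∑ i ∈ A, (x i) ^ 2 ≤ A.card * (x j₀) ^ 2 := by
        calc ∑ i ∈ A, (x i) ^ 2 ≤ ∑ _i ∈ A, (x j₀) ^ 2 := by
              apply Finset.sum_le_sum
              intro i hi
              have hiT : i ∉ T := (Finset.mem_sdiff.mp hi).2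
              have := hTtop j₀ hj₀T i hiT
              calc (x i) ^ 2 = |x i| ^ 2 := (sq_abs _).symm
                _ ≤ |x j₀| ^ 2 := pow_le_pow_left₀ (abs_nonneg _) this 2
                _ = (x j₀) ^ 2 := sq_abs _
          _ = A.card * (x j₀) ^ 2 := by rw [Finset.sum_const, nsmul_eq_mul]
      have step2 : (A.card : ℝ) * (x j₀) ^ 2 ≤ (B.card : ℝ) * (x j₀) ^ 2 := by
        apply mul_le_mul_of_nonneg_right _ (sq_nonneg _)
        exact_mod_cast hcardAB
      have step3 : (B.card : ℝ) * (x j₀) ^ 2 ≤ ∑ j ∈ B, f j := by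
        have : ∀ j ∈ B, (x j₀) ^ 2 ≤ f j := by
          intro j hj
          have hjS : j ∉ S := (Finset.mem_sdiff.mp hj).2
          have hyj : y j = 0 := by
            simp only [hS, Finset.mem_filter, Finset.mem_univ, true_and, not_not] at hjS
            exact hjS
          have := hj₀min j hj
          simp [hf, hyj]
          linarith
        calc (B.card : ℝ) * (x j₀) ^ 2 = B.card • (x j₀) ^ 2 := by rw [nsmul_eq_mul]
          _ ≤ ∑ j ∈ B, f j := Finset.card_nsmul_le_sum B f _ this
      linarith
  -- combine sums
  have key : ∑ i, g i ≤ 16 * ∑ i, f i := by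
    have hAy : ∑ i ∈ A, (y i) ^ 2 ≤ ∑ i ∈ A, (2 * (x i) ^ 2 + 2 * f i) := by
      apply Finset.sum_le_sum
      intro i _
      simp only [hf]
      nlinarith [sq_nonneg (x i + (x i - y i)), sq_nonneg (x i - (x i - y i))]
    have hsplit : ∑ i, g i = ∑ i ∈ T, g i + ∑ i ∈ Tᶜ, g i :=
      (Finset.sum_add_sum_compl T g).symm
    have hTle : ∑ i ∈ T, f i ≤ ∑ i, f i :=
      Finset.sum_le_sum_of_subset_of_nonneg (Finset.subset_univ T) fun i _ _ => hfnn i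
    have hAle : ∑ i ∈ A, f i ≤ ∑ i, f i :=
      Finset.sum_le_sum_of_subset_of_nonneg (Finset.subset_univ A) fun i _ _ => hfnn i
    have hBle : ∑ i ∈ B, f i ≤ ∑ i, f i :=
      Finset.sum_le_sum_of_subset_of_nonneg (Finset.subset_univ B) fun i _ _ => hfnn i
    have hsumA : ∑ i ∈ A, (2 * (x i) ^ 2 + 2 * f i)
        = 2 * ∑ i ∈ A, (x i) ^ 2 + 2 * ∑ i ∈ A, f i := by
      rw [Finset.sum_add_distrib, ← Finset.mul_sum, ← Finset.mul_sum]
    have hfl : (0:ℝ) ≤ ∑ i, f i := Finset.sum_nonneg fun i _ => hfnn i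
    rw [hsplit, hsumT, hsumTc]
    linarith
  -- conclude via norms
  have hn1 : ‖x' - y‖ ^ 2 = ∑ i, g i := by
    rw [EuclideanSpace.norm_eq, Real.sq_sqrt (by positivity)]
    apply Finset.sum_congr rfl
    intro i _
    simp [hg, Real.norm_eq_abs, sq_abs]
  have hn2 : ‖x - y‖ ^ 2 = ∑ i, f i := by
    rw [EuclideanSpace.norm_eq, Real.sq_sqrt (by positivity)]
    apply Finset.sum_congr rfl
    intro i _
    simp [hf, Real.norm_eq_abs, sq_abs]
  have hfinal : ‖x' - y‖ ^ 2 ≤ (4 * ‖x - y‖) ^ 2 := by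
    rw [hn1, mul_pow, hn2]
    norm_num
    linarith
  have := Real.sqrt_le_sqrt hfinal
  rwa [Real.sqrt_sq (norm_nonneg _), Real.sqrt_sq (by positivity)] at this
end
end

section
/- Let H_k^d be the set of Gaussian distributions N(μ, I_d) on ℝ^d with k-sparse mean μ. The family of Scheffé sets of H_k^d, i.e. the family of sets w(μ,ν) = {x ∈ ℝ^d : p_μ(x) > p_ν(x)} where p_μ, p_ν are the densities of N(μ, I_d), N(ν, I_d) and μ, ν range over k-sparse vectors, has VC dimension at most 4k·log(de). -/
noncomputable section

/-- A family `W` of subsets of `α` shatters a finite set `A` if every subset of `A`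
is cut out by some member of `W`. -/
def ShattersSet {α : Type*} (W : Set (Set α)) (A : Finset α) : Prop :=
  ∀ B ⊆ A, ∃ w ∈ W, ∀ a ∈ A, (a ∈ B ↔ a ∈ w)

/-- A vector is `k`-sparse if it has at most `k` nonzero coordinates. -/
def Sparse {d : ℕ} (k : ℕ) (x : Fin d → ℝ) : Prop :=
  (Finset.univ.filter fun i => x i ≠ 0).card ≤ k

/-- The Lebesgue density of `N(μ, I_d)`. -/
def gaussDensity {d : ℕ} (μ : Fin d → ℝ) (x : Fin d → ℝ) : ℝ :=
  (2 * Real.pi) ^ (-(d : ℝ) / 2) * Real.exp (-(∑ i, (x i - μ i) ^ 2) / 2)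

/-- The family of Scheffé sets `w(μ,ν) = {x : p_μ(x) > p_ν(x)}` of the class of Gaussians
`N(μ, I_d)` with `k`-sparse means. -/
def scheffeSets (d k : ℕ) : Set (Set (Fin d → ℝ)) :=
  { w | ∃ μ ν : Fin d → ℝ, Sparse k μ ∧ Sparse k ν ∧
        w = { x | gaussDensity ν x < gaussDensity μ x } }

/-!
For `k`-sparse means `μ, ν`, the Scheffé set `{p_ν < p_μ}` is `{x : 0 < ‖x - ν‖² - ‖x - μ‖²}`,
and this discriminant is an affine function of the at most `m = min (2k) d` coordinates on which
`μ` and `ν` differ. Cover's function-counting argument (delete a point; the patterns extending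
both ways come from the subspace vanishing there) shows that an `r`-dimensional space of functions
cuts out at most `2 ∑_{i<r} C(n-1, i)` sign patterns on `n` points where its members do not vanish,
and shifting by a small constant puts every positivity pattern in this form. Summing over the
`C(d, m)` coordinate sets, a shattered set of size `n` satisfies
`2^n ≤ C(d, m) · 2 ∑_{i≤m} C(n-1, i)`. For `d ≤ 2k` this forces `n ≤ d + 1`; for `d > 2k`,
`C(d, 2k) ≤ d^{2k}/(2k)!` and `(d e)^{2k} < e^{n/2}` reduce the claim to an inequality between
`e^{n/2} ∑_{i≤2k} C(n-1, i)` and `2^n e^{2k} (2k)!`, proved via the binomial theorem for `k ≥ 2`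
and by direct computation for `k = 1`.
-/

open Finset Module

theorem Nat.sum_range_choose_succ_left (a r : ℕ) :
    ∑ i ∈ range (r + 1), (a + 1).choose i =
      ∑ i ∈ range (r + 1), a.choose i + ∑ i ∈ range r, a.choose i := by
  rw [sum_range_succ', sum_range_succ' (a.choose ·)]
  simp only [Nat.choose_succ_succ', sum_add_distrib, Nat.choose_zero_right]
  ring

theorem Nat.sum_range_choose_lt_two_pow {r N : ℕ} (h : r < N) :
    ∑ i ∈ range (r + 1), N.choose i < 2 ^ N := by
  rw [← Nat.sum_range_choose N]
  exact sum_lt_sum_of_subset (range_subset_range.2 (by omega)) (self_mem_range_succ N)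
    (by simpa using h) (by simp) fun _ _ _ => Nat.zero_le _

section SignPatterns

variable {α 𝕜 : Type*} [Field 𝕜] [LinearOrder 𝕜] {V : Submodule 𝕜 (α → 𝕜)} {A B : Finset α}
  {x : α}

open Classical in
def signPatterns (V : Submodule 𝕜 (α → 𝕜)) (A : Finset α) : Finset (Finset α) :=
  A.powerset.filter fun B => ∃ f ∈ V, (∀ a ∈ A, f a ≠ 0) ∧ A.filter (0 < f ·) = B

theorem signPatterns_subset_powerset : signPatterns V A ⊆ A.powerset := by
  classical
  exact filter_subset _ _

theorem mem_signPatterns :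
    B ∈ signPatterns V A ↔ ∃ f ∈ V, (∀ a ∈ A, f a ≠ 0) ∧ A.filter (0 < f ·) = B := by
  classical
  rw [signPatterns, mem_filter, mem_powerset, and_iff_right_iff_imp]
  rintro ⟨f, -, -, rfl⟩
  exact filter_subset _ _

theorem finrank_inf_ker_proj_lt [FiniteDimensional 𝕜 V] (hx : x ∈ A)
    (hA : (signPatterns V A).Nonempty) :
    finrank 𝕜 ↥(V ⊓ LinearMap.ker (LinearMap.proj x)) < finrank 𝕜 V := by
  obtain ⟨B, hB⟩ := hA
  obtain ⟨f, hf, hf0, -⟩ := mem_signPatterns.1 hB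
  exact Submodule.finrank_lt_finrank_of_lt <| inf_le_left.lt_of_not_ge fun h => hf0 x hx (h hf).2

theorem erase_mem_signPatterns [DecidableEq α] (hB : B ∈ signPatterns V A) (x : α) :
    B.erase x ∈ signPatterns V (A.erase x) := by
  obtain ⟨f, hf, hf0, rfl⟩ := mem_signPatterns.1 hB
  exact mem_signPatterns.2 ⟨f, hf, fun a ha => hf0 a (mem_of_mem_erase ha), filter_erase _ _ _⟩

variable [IsStrictOrderedRing 𝕜]

lemma ne_zero_and_pos_iff_of_pos_iff {u v s t : 𝕜} (hu : u ≠ 0) (hv : v ≠ 0) (huv : 0 < u ↔ 0 < v)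
    (hs : 0 < s) (ht : 0 < t) : s * u + t * v ≠ 0 ∧ (0 < s * u + t * v ↔ 0 < u) := by
  rcases hu.lt_or_gt with hu | hu
  · have hv : v < 0 := lt_of_le_of_ne (not_lt.1 fun h => (huv.2 h).not_gt hu) hv
    have : s * u + t * v < 0 := by nlinarith
    exact ⟨this.ne, iff_of_false this.not_gt hu.not_gt⟩
  · have : 0 < s * u + t * v := by nlinarith [huv.1 hu]
    exact ⟨this.ne', iff_of_true this hu⟩

theorem filter_pos_mem_signPatterns (h1 : (fun _ => 1) ∈ V) {f : α → 𝕜} (hf : f ∈ V) :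
    A.filter (0 < f ·) ∈ signPatterns V A := by
  classical
  set P := insert 1 ((A.filter (0 < f ·)).image f)
  have hP : 0 < P.min' (insert_nonempty _ _) := by
    simp only [P, lt_min'_iff, mem_insert, mem_image, mem_filter]
    rintro _ (rfl | ⟨a, ⟨-, ha⟩, rfl⟩)
    exacts [one_pos, ha]
  set c := P.min' (insert_nonempty _ _) / 2
  have hcf : ∀ a ∈ A, 0 < f a → c < f a := fun a ha hfa =>
    (half_lt_self hP).trans_le <| min'_le P (f a) <| mem_insert_of_mem <|
      mem_image_of_mem f <| mem_filter.2 ⟨ha, hfa⟩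
  have hshift : ∀ a ∈ A, f a - c ≠ 0 ∧ (0 < f a - c ↔ 0 < f a) := by
    intro a ha
    by_cases hfa : 0 < f a
    · have := hcf a ha hfa
      exact ⟨by linarith, iff_of_true (by linarith) hfa⟩
    · have : 0 < c := half_pos hP
      exact ⟨by linarith, iff_of_false (by linarith) hfa⟩
  exact mem_signPatterns.2 ⟨f - c • fun _ => 1, sub_mem hf (V.smul_mem c h1),
    fun a ha => by simpa using (hshift a ha).1,
    filter_congr fun a ha => by simpa using (hshift a ha).2⟩

variable [DecidableEq α]

/-- The patterns of `A.erase x` that extend to `x` in both ways are cut out by functions of `V`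
vanishing at `x`: a positive combination of the two witnesses keeps their signs off `x`. -/
theorem card_signPatterns_le_add (hx : x ∈ A) :
    #(signPatterns V A) ≤ #(signPatterns V (A.erase x)) +
      #(signPatterns (V ⊓ LinearMap.ker (LinearMap.proj x)) (A.erase x)) := by
  set S := signPatterns V A
  set S₀ := (S.filter (x ∉ ·)).image (·.erase x)
  set S₁ := (S.filter (x ∈ ·)).image (·.erase x)
  have hS₀ : #S₀ = #(S.filter (x ∉ ·)) := card_image_of_injOn fun B hB B' hB' h => by
    simpa [erase_eq_of_notMem (mem_filter.1 hB).2, erase_eq_of_notMem (mem_filter.1 hB').2] using h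
  have hS₁ : #S₁ = #(S.filter (x ∈ ·)) := card_image_of_injOn fun B hB B' hB' h => by
    rw [← insert_erase (mem_filter.1 hB).2, ← insert_erase (mem_filter.1 hB').2]
    exact congrArg (insert x) h
  have hunion : S₀ ∪ S₁ ⊆ signPatterns V (A.erase x) := by
    simp only [S₀, S₁, union_subset_iff, image_subset_iff]
    exact ⟨fun B hB => erase_mem_signPatterns (mem_filter.1 hB).1 x,
      fun B hB => erase_mem_signPatterns (mem_filter.1 hB).1 x⟩
  have hinter : S₀ ∩ S₁ ⊆ signPatterns (V ⊓ LinearMap.ker (LinearMap.proj x)) (A.erase x) := by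
    intro P hP
    simp only [S₀, S₁, mem_inter, mem_image, mem_filter] at hP
    obtain ⟨⟨B₀, ⟨hB₀, hxB₀⟩, rfl⟩, ⟨B₁, ⟨hB₁, hxB₁⟩, hB⟩⟩ := hP
    obtain ⟨g, hg, hg0, rfl⟩ := mem_signPatterns.1 hB₀
    obtain ⟨f, hf, hf0, rfl⟩ := mem_signPatterns.1 hB₁
    have hfx : 0 < f x := (mem_filter.1 hxB₁).2
    have hgx : g x < 0 := lt_of_le_of_ne (not_lt.1 fun h => hxB₀ (mem_filter.2 ⟨hx, h⟩)) (hg0 x hx)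
    simp only [← filter_erase] at hB ⊢
    have hfg : ∀ a ∈ A.erase x, 0 < f a ↔ 0 < g a := filter_inj'.1 hB
    have hcomb := fun a ha => ne_zero_and_pos_iff_of_pos_iff (hf0 a (mem_of_mem_erase ha))
      (hg0 a (mem_of_mem_erase ha)) (hfg a ha) (neg_pos.2 hgx) hfx
    refine mem_signPatterns.2 ⟨-g x • f + f x • g, Submodule.mem_inf.2
      ⟨add_mem (V.smul_mem _ hf) (V.smul_mem _ hg), LinearMap.mem_ker.2 ?_⟩,
      fun a ha => (hcomb a ha).1, filter_congr fun a ha => (hcomb a ha).2.trans (hfg a ha)⟩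
    simp only [LinearMap.proj_apply, Pi.add_apply, Pi.smul_apply, smul_eq_mul]
    ring
  calc #S = #(S.filter (x ∉ ·)) + #(S.filter (x ∈ ·)) := by
        rw [add_comm, card_filter_add_card_filter_not]
    _ = #(S₀ ∪ S₁) + #(S₀ ∩ S₁) := by rw [card_union_add_card_inter, hS₀, hS₁]
    _ ≤ _ := add_le_add (card_le_card hunion) (card_le_card hinter)

theorem card_signPatterns_insert_le [FiniteDimensional 𝕜 V] (hx : x ∉ A) :
    #(signPatterns V (insert x A)) ≤ 2 * ∑ i ∈ range (finrank 𝕜 V), (#A).choose i := by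
  induction A using Finset.induction_on generalizing x V with
  | empty =>
    obtain hempty | hne := (signPatterns V {x}).eq_empty_or_nonempty
    · simp [hempty]
    have hV₀ := finrank_inf_ker_proj_lt (mem_singleton_self x) hne
    calc #(signPatterns V {x}) ≤ #({x} : Finset α).powerset :=
          card_le_card signPatterns_subset_powerset
      _ = 2 * ∑ i ∈ range 1, (#(∅ : Finset α)).choose i := by simp
      _ ≤ _ := Nat.mul_le_mul_left 2 <| sum_le_sum_of_subset <| range_subset_range.2 <|
          Nat.one_le_of_lt hV₀
  | insert y A hy ih =>
    obtain hempty | hne := (signPatterns V (insert x (insert y A))).eq_empty_or_nonempty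
    · simp [hempty]
    have hV₀ := finrank_inf_ker_proj_lt (mem_insert_self x _) hne
    calc #(signPatterns V (insert x (insert y A)))
        ≤ #(signPatterns V (insert y A)) +
            #(signPatterns (V ⊓ LinearMap.ker (LinearMap.proj x)) (insert y A)) := by
          simpa [erase_insert hx] using
            card_signPatterns_le_add (V := V) (mem_insert_self x (insert y A))
      _ ≤ 2 * ∑ i ∈ range (finrank 𝕜 V), (#A).choose i +
            2 * ∑ i ∈ range (finrank 𝕜 V - 1), (#A).choose i := by
          gcongr
          · exact ih hy
          · exact (ih hy).trans <| Nat.mul_le_mul_left 2 <| sum_le_sum_of_subset <|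
              range_subset_range.2 (by omega)
      _ = 2 * ∑ i ∈ range (finrank 𝕜 V), (#(insert y A)).choose i := by
          obtain ⟨r, hr⟩ : ∃ r, finrank 𝕜 V = r + 1 := ⟨_, (Nat.succ_pred_eq_of_pos hV₀.pos).symm⟩
          rw [hr, card_insert_of_notMem hy, Nat.sum_range_choose_succ_left, Nat.add_sub_cancel]
          ring

theorem card_signPatterns_le [FiniteDimensional 𝕜 V] (hA : A.Nonempty) :
    #(signPatterns V A) ≤ 2 * ∑ i ∈ range (finrank 𝕜 V), (#A - 1).choose i := by
  obtain ⟨x, hx⟩ := hA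
  simpa [insert_erase hx, card_erase_of_mem hx] using
    card_signPatterns_insert_le (V := V) (notMem_erase x A)

end SignPatterns

section AffineFunctions

variable {ι 𝕜 : Type*} [Field 𝕜] {T : Finset ι}

def affineFunctionsOn (T : Finset ι) : Submodule 𝕜 ((ι → 𝕜) → 𝕜) :=
  Submodule.span 𝕜 (Set.range fun o : Option T => o.elim 1 fun i x => x i)

theorem one_mem_affineFunctionsOn : (fun _ => 1) ∈ affineFunctionsOn (𝕜 := 𝕜) T :=
  Submodule.subset_span ⟨none, rfl⟩

theorem coord_mem_affineFunctionsOn {i : ι} (hi : i ∈ T) :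
    (fun x => x i) ∈ affineFunctionsOn (𝕜 := 𝕜) T :=
  Submodule.subset_span ⟨some ⟨i, hi⟩, rfl⟩

instance : FiniteDimensional 𝕜 (affineFunctionsOn (𝕜 := 𝕜) T) :=
  FiniteDimensional.span_of_finite 𝕜 (Set.finite_range _)

theorem finrank_affineFunctionsOn_le : finrank 𝕜 (affineFunctionsOn (𝕜 := 𝕜) T) ≤ #T + 1 := by
  refine (finrank_range_le_card (R := 𝕜) _).trans ?_
  rw [Fintype.card_option, Fintype.card_coe]

end AffineFunctions

section Gaussian

variable {d k : ℕ} {μ ν : Fin d → ℝ}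

theorem gaussDensity_lt_gaussDensity_iff {x : Fin d → ℝ} :
    gaussDensity ν x < gaussDensity μ x ↔ ∑ i, (x i - μ i) ^ 2 < ∑ i, (x i - ν i) ^ 2 := by
  rw [gaussDensity, gaussDensity, mul_lt_mul_iff_right₀ (by positivity), Real.exp_lt_exp,
    div_lt_div_iff_of_pos_right two_pos, neg_lt_neg_iff]

theorem exists_mem_affineFunctionsOn_gaussDensity_lt_iff {T : Finset (Fin d)}
    (hT : ∀ i ∉ T, μ i = ν i) :
    ∃ f ∈ affineFunctionsOn T, ∀ x, gaussDensity ν x < gaussDensity μ x ↔ 0 < f x := by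
  refine ⟨(∑ i, (ν i ^ 2 - μ i ^ 2)) • (fun _ => 1) + ∑ i ∈ T, (2 * (μ i - ν i)) • fun x => x i,
    add_mem (Submodule.smul_mem _ _ one_mem_affineFunctionsOn)
      (sum_mem fun i hi => Submodule.smul_mem _ _ (coord_mem_affineFunctionsOn hi)), fun x => ?_⟩
  have hsupp : ∑ i ∈ T, 2 * (μ i - ν i) * x i = ∑ i, 2 * (μ i - ν i) * x i :=
    sum_subset (subset_univ T) fun i _ hi => by simp [hT i hi]
  simp only [gaussDensity_lt_gaussDensity_iff, Pi.add_apply, Pi.smul_apply, smul_eq_mul,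
    Finset.sum_apply, mul_one, hsupp]
  rw [← sub_pos, ← sum_sub_distrib, ← sum_add_distrib]
  exact iff_of_eq (congrArg _ (sum_congr rfl fun i _ => by ring))

theorem Sparse.eq_zero {x : Fin d → ℝ} (hx : Sparse 0 x) : x = 0 := by
  funext i
  by_contra hi
  exact (card_pos.2 ⟨i, mem_filter.2 ⟨mem_univ i, hi⟩⟩).ne' (Nat.le_zero.1 hx)

theorem exists_card_eq_forall_notMem_eq (hμ : Sparse k μ) (hν : Sparse k ν) :
    ∃ T : Finset (Fin d), #T = min (2 * k) d ∧ ∀ i ∉ T, μ i = ν i := by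
  set D := univ.filter fun i => μ i ≠ ν i
  have hD : #D ≤ 2 * k := by
    calc #D ≤ #(univ.filter fun i => μ i ≠ 0) + #(univ.filter fun i => ν i ≠ 0) := by
          refine (card_le_card fun i hi => ?_).trans (card_union_le _ _)
          by_contra h
          simp_all [D]
      _ ≤ 2 * k := by rw [two_mul]; exact add_le_add hμ hν
  obtain ⟨T, hDT, -, hT⟩ := exists_subsuperset_card_eq (subset_univ D)
    (le_min hD ((card_le_univ D).trans_eq (Fintype.card_fin d))) (by simp)
  exact ⟨T, hT, fun i hi => by by_contra h; exact hi (hDT (by simp [D, h]))⟩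

theorem ne_zero_of_shattersSet_scheffeSets {A : Finset (Fin d → ℝ)}
    (hA : ShattersSet (scheffeSets d k) A) (hne : A.Nonempty) : d ≠ 0 ∧ k ≠ 0 := by
  obtain ⟨a, ha⟩ := hne
  obtain ⟨w, ⟨μ, ν, hμ, hν, rfl⟩, hw⟩ := hA A Subset.rfl
  have hμν : μ ≠ ν := by
    rintro rfl
    exact lt_irrefl (gaussDensity μ a) ((hw a ha).1 ha)
  refine ⟨?_, ?_⟩
  · rintro rfl
    exact hμν (Subsingleton.elim _ _)
  · rintro rfl
    exact hμν (hμ.eq_zero.trans hν.eq_zero.symm)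

theorem two_pow_card_le_of_shattersSet_scheffeSets {A : Finset (Fin d → ℝ)}
    (hA : ShattersSet (scheffeSets d k) A) (hne : A.Nonempty) :
    2 ^ #A ≤ d.choose (min (2 * k) d) *
      (2 * ∑ i ∈ range (min (2 * k) d + 1), (#A - 1).choose i) := by
  classical
  set m := min (2 * k) d
  have hcover : A.powerset ⊆
      (powersetCard m univ).biUnion fun T => signPatterns (affineFunctionsOn T) A := by
    intro B hBA
    obtain ⟨w, ⟨μ, ν, hμ, hν, rfl⟩, hw⟩ := hA B (mem_powerset.1 hBA)
    obtain ⟨T, hTm, hT⟩ := exists_card_eq_forall_notMem_eq hμ hν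
    obtain ⟨f, hf, hfw⟩ := exists_mem_affineFunctionsOn_gaussDensity_lt_iff hT
    have hB : A.filter (0 < f ·) = B := by
      ext a
      rw [mem_filter]
      constructor
      · rintro ⟨ha, hfa⟩
        exact (hw a ha).2 ((hfw a).2 hfa)
      · intro haB
        have ha := mem_powerset.1 hBA haB
        exact ⟨ha, (hfw a).1 ((hw a ha).1 haB)⟩
    exact mem_biUnion.2 ⟨T, mem_powersetCard.2 ⟨subset_univ T, hTm⟩,
      hB ▸ filter_pos_mem_signPatterns one_mem_affineFunctionsOn hf⟩
  calc 2 ^ #A = #A.powerset := (card_powerset A).symm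
    _ ≤ ∑ T ∈ powersetCard m univ, #(signPatterns (affineFunctionsOn T) A) :=
        (card_le_card hcover).trans card_biUnion_le
    _ ≤ ∑ T ∈ powersetCard m univ, 2 * ∑ i ∈ range (m + 1), (#A - 1).choose i :=
        sum_le_sum fun T hT => (card_signPatterns_le hne).trans <| Nat.mul_le_mul_left 2 <|
          sum_le_sum_of_subset <| range_subset_range.2 <|
            finrank_affineFunctionsOn_le.trans_eq (by rw [(mem_powersetCard.1 hT).2])
    _ = _ := by rw [sum_const, card_powersetCard, card_univ, Fintype.card_fin, smul_eq_mul]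

end Gaussian

open Real

theorem le_add_one_of_two_pow_le_sum_choose {n r : ℕ} (h : 2 ^ n ≤ 2 * ∑ i ∈ range (r + 1), (n - 1).choose i) :
    n ≤ r + 1 := by
  by_contra! hn
  have hlt := Nat.sum_range_choose_lt_two_pow (show r < n - 1 by omega)
  have h2 : 2 ^ n = 2 * 2 ^ (n - 1) := by rw [← pow_succ']; congr 1; omega
  omega

theorem pow_mul_sum_range_choose_le {t : ℝ} (ht₀ : 0 ≤ t) (ht₁ : t ≤ 1) (m N : ℕ) :
    t ^ m * ∑ i ∈ range (m + 1), (N.choose i : ℝ) ≤ (1 + t) ^ N := by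
  calc t ^ m * ∑ i ∈ range (m + 1), (N.choose i : ℝ)
      ≤ ∑ i ∈ range (m + 1), t ^ i * N.choose i := by
        rw [mul_sum]
        exact sum_le_sum fun i hi => mul_le_mul_of_nonneg_right
          (pow_le_pow_of_le_one ht₀ ht₁ (Nat.lt_succ_iff.1 (mem_range.1 hi))) (by positivity)
    _ ≤ ∑ i ∈ range (N + m + 1), t ^ i * N.choose i :=
        sum_le_sum_of_subset_of_nonneg (range_subset_range.2 (by omega)) fun _ _ _ => by positivity
    _ = ∑ i ∈ range (N + 1), t ^ i * N.choose i := by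
        refine (sum_subset (range_subset_range.2 (by omega)) fun i _ hi => ?_).symm
        rw [Nat.choose_eq_zero_of_lt (by simpa using hi), Nat.cast_zero, mul_zero]
    _ = (1 + t) ^ N := by simp [add_comm 1 t, add_pow]

theorem exp_half_lt : exp (1 / 2) < 1.6488 := by
  have h : exp (1 / 2) ^ 2 = exp 1 := by rw [← exp_nat_mul]; norm_num
  exact lt_of_pow_lt_pow_left₀ 2 (by norm_num) (h ▸ exp_one_lt_d9.trans (by norm_num))

theorem exp_two_gt : 7.389 < exp 2 := by
  have h : exp 1 ^ 2 = exp 2 := by rw [← exp_nat_mul]; norm_num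
  exact h ▸ (by norm_num : (7.389 : ℝ) < 2.7182818283 ^ 2).trans
    (pow_lt_pow_left₀ exp_one_gt_d9 (by norm_num) two_ne_zero)

theorem five_pow_mul_exp_half_lt {m : ℕ} (hm : 4 ≤ m) : 5 ^ m * exp (1 / 2) < exp m * m.factorial := by
  induction m, hm using Nat.le_induction with
  | base =>
    have h4 : 2.718 ^ 4 < exp 4 := by
      rw [show (4 : ℝ) = (4 : ℕ) * 1 by norm_num, exp_nat_mul]
      exact pow_lt_pow_left₀ (exp_one_gt_d9.trans' (by norm_num)) (by norm_num) (by norm_num)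
    have := exp_half_lt
    norm_num [Nat.factorial] at h4 ⊢
    nlinarith
  | succ m hm ih =>
    have he : 2.7 < exp 1 := exp_one_gt_d9.trans' (by norm_num)
    have hm' : (4 : ℝ) ≤ m := by exact_mod_cast hm
    have hpos : 0 < exp m * m.factorial := by positivity
    calc 5 ^ (m + 1) * exp (1 / 2) = 5 * (5 ^ m * exp (1 / 2)) := by ring
      _ < 5 * (exp m * m.factorial) := by gcongr
      _ ≤ exp 1 * (m + 1) * (exp m * m.factorial) := by gcongr; nlinarith
      _ = exp (m + 1 : ℕ) * (m + 1).factorial := by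
        push_cast [Nat.factorial_succ, exp_add]
        ring

theorem two_mul_exp_mul_sum_range_choose_lt {m : ℕ} (hm : 4 ≤ m) (N : ℕ) :
    2 * exp ((N + 1) / 2) * ∑ i ∈ range (m + 1), (N.choose i : ℝ) <
      2 ^ (N + 1) * exp m * m.factorial := by
  -- `t = 1/5` is small enough that `(1 + t) √e ≤ 2`.
  have hS : ∑ i ∈ range (m + 1), (N.choose i : ℝ) ≤ 5 ^ m * (6 / 5) ^ N := by
    have := pow_mul_sum_range_choose_le (t := 1 / 5) (by norm_num) (by norm_num) m N
    rw [one_div_pow, one_div, inv_mul_le_iff₀ (by positivity)] at this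
    norm_num at this
    exact this
  have hexp : exp ((N + 1) / 2) = exp (1 / 2) * exp (1 / 2) ^ N := by
    rw [← exp_nat_mul, ← exp_add]; ring_nf
  calc 2 * exp ((N + 1) / 2) * ∑ i ∈ range (m + 1), (N.choose i : ℝ)
      ≤ 2 * (exp (1 / 2) * exp (1 / 2) ^ N) * (5 ^ m * (6 / 5) ^ N) := by rw [hexp]; gcongr
    _ = 2 * (5 ^ m * exp (1 / 2)) * (6 / 5 * exp (1 / 2)) ^ N := by ring
    _ ≤ 2 * (5 ^ m * exp (1 / 2)) * 2 ^ N := by gcongr; linarith [exp_half_lt]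
    _ < 2 * (exp m * m.factorial) * 2 ^ N := by
        have := five_pow_mul_exp_half_lt hm
        gcongr
    _ = 2 ^ (N + 1) * exp m * m.factorial := by ring

/-- The ratio of the two sides increases up to `N = 10`, where it is about `0.906`. -/
theorem pow_mul_add_sq_add_two_lt (N : ℕ) :
    (1.6488 : ℝ) ^ (N + 1) * (N ^ 2 + N + 2) < 2 ^ (N + 2) * 7.389 := by
  obtain hN | hN := lt_or_ge N 10
  · interval_cases N <;> norm_num
  induction N, hN using Nat.le_induction with
  | base => norm_num
  | succ N hN ih =>
    have hN' : (10 : ℝ) ≤ N := by exact_mod_cast hN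
    calc (1.6488 : ℝ) ^ (N + 1 + 1) * (((N + 1 : ℕ) : ℝ) ^ 2 + ((N + 1 : ℕ) : ℝ) + 2)
        = (1.6488 : ℝ) ^ (N + 1) * (1.6488 * (((N : ℝ) + 1) ^ 2 + ((N : ℝ) + 1) + 2)) := by
          push_cast; ring
      _ ≤ (1.6488 : ℝ) ^ (N + 1) * (2 * ((N : ℝ) ^ 2 + N + 2)) :=
          mul_le_mul_of_nonneg_left (by nlinarith) (by positivity)
      _ < 2 * (2 ^ (N + 2) * 7.389) := by linarith
      _ = 2 ^ (N + 1 + 2) * 7.389 := by ring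

theorem two_mul_exp_mul_sum_range_three_choose_lt (N : ℕ) :
    2 * exp ((N + 1) / 2) * ∑ i ∈ range 3, (N.choose i : ℝ) <
      2 ^ (N + 1) * exp 2 * (2 : ℕ).factorial := by
  have hS : 2 * ∑ i ∈ range 3, (N.choose i : ℝ) = N ^ 2 + N + 2 := by
    simp [sum_range_succ, Nat.cast_choose_two]
    ring
  have hexp : exp ((N + 1) / 2) = exp (1 / 2) ^ (N + 1) := by
    rw [← exp_nat_mul]; push_cast; ring_nf
  calc 2 * exp ((N + 1) / 2) * ∑ i ∈ range 3, (N.choose i : ℝ)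
      = exp (1 / 2) ^ (N + 1) * (N ^ 2 + N + 2) := by rw [hexp, ← hS]; ring
    _ ≤ 1.6488 ^ (N + 1) * (N ^ 2 + N + 2) := by gcongr; exact exp_half_lt.le
    _ < 2 ^ (N + 2) * 7.389 := pow_mul_add_sq_add_two_lt N
    _ < 2 ^ (N + 2) * exp 2 := by gcongr; exact exp_two_gt
    _ = 2 ^ (N + 1) * exp 2 * (2 : ℕ).factorial := by norm_num [Nat.factorial]; ring

theorem two_mul_exp_mul_sum_range_choose_lt_of_ne_zero {k : ℕ} (hk : k ≠ 0) (N : ℕ) :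
    2 * exp ((N + 1) / 2) * ∑ i ∈ range (2 * k + 1), (N.choose i : ℝ) <
      2 ^ (N + 1) * exp (2 * k : ℕ) * (2 * k).factorial := by
  obtain rfl | hk := eq_or_ne k 1
  · simpa using two_mul_exp_mul_sum_range_three_choose_lt N
  · exact two_mul_exp_mul_sum_range_choose_lt (by omega) N

theorem add_one_le_of_two_pow_le_choose_mul {d k N : ℕ} (hk : k ≠ 0) (hd : 2 * k < d)
    (h : 2 ^ (N + 1) ≤ d.choose (2 * k) * (2 * ∑ i ∈ range (2 * k + 1), N.choose i)) :
    (N + 1 : ℝ) ≤ 4 * k * (log d + 1) := by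
  by_contra! hN
  have hd₀ : (0 : ℝ) < d := by exact_mod_cast (Nat.zero_le _).trans_lt hd
  have h' : (2 : ℝ) ^ (N + 1) ≤ d.choose (2 * k) * (2 * ∑ i ∈ range (2 * k + 1), (N.choose i : ℝ)) := by
    exact_mod_cast h
  set S := ∑ i ∈ range (2 * k + 1), (N.choose i : ℝ)
  have hS : 0 < S := sum_pos' (fun _ _ => by positivity) ⟨0, by simp, by simp⟩
  have hde : (d * exp 1) ^ (2 * k) < exp ((N + 1) / 2) := by
    rw [← exp_log hd₀, ← exp_add, ← exp_nat_mul, exp_lt_exp]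
    push_cast
    linarith
  have hchoose : (d.choose (2 * k) : ℝ) * (2 * k).factorial ≤ d ^ (2 * k) :=
    (le_div_iff₀ (by positivity)).1 (Nat.choose_le_pow_div _ _)
  refine (two_mul_exp_mul_sum_range_choose_lt_of_ne_zero hk N).not_ge ?_
  calc 2 ^ (N + 1) * exp (2 * k : ℕ) * (2 * k).factorial
      ≤ d.choose (2 * k) * (2 * S) * exp (2 * k : ℕ) * (2 * k).factorial := by gcongr
    _ = d.choose (2 * k) * (2 * k).factorial * exp 1 ^ (2 * k) * (2 * S) := by
        rw [← exp_nat_mul, mul_one]; ring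
    _ ≤ d ^ (2 * k) * exp 1 ^ (2 * k) * (2 * S) := by gcongr
    _ = (d * exp 1) ^ (2 * k) * (2 * S) := by ring
    _ ≤ exp ((N + 1) / 2) * (2 * S) := by gcongr
    _ = 2 * exp ((N + 1) / 2) * S := by ring

theorem cast_le_of_two_pow_le_choose_mul {d k n : ℕ} (hk : k ≠ 0) (hn : n ≠ 0)
    (h : 2 ^ n ≤ d.choose (min (2 * k) d) *
      (2 * ∑ i ∈ range (min (2 * k) d + 1), (n - 1).choose i)) :
    (n : ℝ) ≤ 4 * k * (log d + 1) := by
  obtain hdk | hdk := le_or_gt d (2 * k)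
  · rw [min_eq_right hdk, Nat.choose_self, one_mul] at h
    have hn : (n : ℝ) ≤ d + 1 := by exact_mod_cast le_add_one_of_two_pow_le_sum_choose h
    have hdk : (d : ℝ) ≤ 2 * k := by exact_mod_cast hdk
    have hk : (1 : ℝ) ≤ k := by exact_mod_cast Nat.one_le_iff_ne_zero.2 hk
    nlinarith [log_natCast_nonneg d]
  · rw [min_eq_left hdk.le] at h
    obtain ⟨N, rfl⟩ := Nat.exists_eq_succ_of_ne_zero hn
    simpa using add_one_le_of_two_pow_le_choose_mul hk hdk h

/-- The family of Scheffé sets of `d`-dimensional identity-covariance Gaussians with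
`k`-sparse means has VC dimension at most `4k·log(de)`: any finite set it shatters has
cardinality at most `4k·log(de)`. -/
theorem stmt4 (d k : ℕ) (A : Finset (Fin d → ℝ)) (hA : ShattersSet (scheffeSets d k) A) :
    (A.card : ℝ) ≤ 4 * k * Real.log (d * Real.exp 1) := by
  obtain rfl | hne := A.eq_empty_or_nonempty
  · obtain rfl | hd := eq_or_ne d 0
    · simp
    · rw [card_empty, Nat.cast_zero, log_mul (by positivity) (exp_ne_zero 1), log_exp]
      positivity
  obtain ⟨hd, hk⟩ := ne_zero_of_shattersSet_scheffeSets hA hne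
  rw [log_mul (by positivity) (exp_ne_zero 1), log_exp]
  exact cast_le_of_two_pow_le_choose_mul hk hne.card_pos.ne'
    (two_pow_card_le_of_shattersSet_scheffeSets hA hne)
end
end

section
/- For d, k ∈ ℕ with k ≤ d and δ > 0, let C(k,δ) = { x ∈ ℝ^d : ∃ y ∈ ℝ^d with ‖y‖₂ ≤ 1, ‖y‖₁ ≤ √k, and ‖x − y‖₂ ≤ δ }. Then: (1) C(k,δ) is compact and convex; (2) the (Euclidean) diameter of C(k,δ) is at most A·(1+δ) for a universal constant A; (3) there is a universal constant A' such that for every v ∈ ℝ^d with ‖v‖₂ ≤ 1 and ‖v‖₁ ≤ √k, the closed Euclidean ball B(v,δ) is contained in C(k,δ) and its Lebesgue measure satisfies vol(B(v,δ)) ≥ exp(−A'·(d/(δ√k) + k²·log d)) · vol(C(k,δ)). -/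
open MeasureTheory

noncomputable section

/-- The "fattened" scaled `ℓ₁` ball
`C(k,δ) = { x : ∃ y, ‖y‖₂ ≤ 1, ‖y‖₁ ≤ √k, ‖x - y‖₂ ≤ δ }` in `ℝ^d`. -/
def Cset (d k : ℕ) (δ : ℝ) : Set (EuclideanSpace ℝ (Fin d)) :=
  { x | ∃ y : EuclideanSpace ℝ (Fin d),
      ‖y‖ ≤ 1 ∧ (∑ i, |y i|) ≤ Real.sqrt k ∧ ‖x - y‖ ≤ δ }

open Metric Finset ENNReal Pointwise

set_option maxHeartbeats 1000000


lemma inner_le_max (d : ℕ) (w y : EuclideanSpace ℝ (Fin d)) (r M : ℝ)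
    (hM : ∀ i, |w i| ≤ M) (hy1 : (∑ i, |y i|) ≤ r) (hr : 0 ≤ r) (hM0 : 0 ≤ M) :
    inner ℝ w y ≤ r * M := by
  have h1 : (inner ℝ w y : ℝ) = ∑ i, w i * y i := by
    simp [PiLp.inner_apply, RCLike.inner_apply, conj_trivial, mul_comm]
  rw [h1]
  calc ∑ i, w i * y i ≤ ∑ i, M * |y i| := by
        refine Finset.sum_le_sum fun i _ => ?_
        calc w i * y i ≤ |w i * y i| := le_abs_self _
          _ = |w i| * |y i| := abs_mul _ _
          _ ≤ M * |y i| := by have := hM i; have := abs_nonneg (y i); nlinarith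
    _ = M * ∑ i, |y i| := by rw [Finset.mul_sum]
    _ ≤ M * r := by nlinarith
    _ = r * M := mul_comm _ _

lemma fw (d : ℕ) (hd : 0 < d) (r : ℝ) (hr : 1 ≤ r) (y : EuclideanSpace ℝ (Fin d))
    (hy2 : ‖y‖ ≤ 1) (hy1 : (∑ i, |y i|) ≤ r) :
    ∀ t : ℕ, 1 ≤ t → ∃ s : Fin t → EuclideanSpace ℝ (Fin d),
      (∀ j, s j = 0 ∨ ∃ i c, (c = r ∨ c = -r) ∧ s j = EuclideanSpace.single i c) ∧
      ‖y - (t : ℝ)⁻¹ • ∑ j, s j‖ ^ 2 ≤ 4 * r ^ 2 / t := by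
  intro t
  induction t with
  | zero => omega
  | succ t ih =>
    intro _
    rcases Nat.eq_or_lt_of_le (Nat.zero_le t) with h0 | h1
    · -- base case t = 0, so t+1 = 1
      subst h0
      refine ⟨fun _ => 0, fun j => Or.inl rfl, ?_⟩
      rw [Finset.sum_const_zero, smul_zero, sub_zero]
      norm_num
      nlinarith [norm_nonneg y]
    · -- inductive step, t ≥ 1
      obtain ⟨s, hs, hb⟩ := ih h1
      have ht0 : (t : ℝ) ≠ 0 := by positivity
      set z : EuclideanSpace ℝ (Fin d) := (t : ℝ)⁻¹ • ∑ j, s j with hzdef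
      set w : EuclideanSpace ℝ (Fin d) := y - z with hwdef
      obtain ⟨i₀, -, hi₀⟩ := Finset.exists_max_image Finset.univ (fun i => |w i|)
        (Finset.univ_nonempty_iff.mpr ⟨⟨0, hd⟩⟩)
      set c : ℝ := if 0 ≤ w i₀ then r else -r with hcdef
      set a : EuclideanSpace ℝ (Fin d) := EuclideanSpace.single i₀ c with hadef
      refine ⟨Fin.snoc s a, ?_, ?_⟩
      · intro j
        refine Fin.lastCases ?_ (fun i => ?_) j
        · right
          refine ⟨i₀, c, ?_, by simp [hadef]⟩
          by_cases h : 0 ≤ w i₀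
          · exact Or.inl (by rw [hcdef, if_pos h])
          · exact Or.inr (by rw [hcdef, if_neg h])
        · simpa using hs i
      · -- the norm bound
        have hsum : ∑ j : Fin (t+1), Fin.snoc s a j = (∑ j : Fin t, s j) + a := by
          rw [Fin.sum_univ_castSucc]
          simp [Fin.snoc_castSucc, Fin.snoc_last]
        rw [hsum]
        have hz : (t : ℝ) • z = ∑ j, s j := smul_inv_smul₀ ht0 _
        have ht1 : ((t : ℝ) + 1) ≠ 0 := by positivity
        have key : y - ((t : ℝ) + 1)⁻¹ • (∑ j, s j + a)
            = ((t : ℝ) + 1)⁻¹ • ((t : ℝ) • w + (y - a)) := by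
          rw [← hz, hwdef]
          match_scalars <;> field_simp
        have hcast : ((t + 1 : ℕ) : ℝ) = (t : ℝ) + 1 := by push_cast; ring
        rw [hcast, key]
        -- inner product bound : ⟪w, y - a⟫ ≤ 0
        have hwa : (inner ℝ w a : ℝ) = r * |w i₀| := by
          rw [hadef, EuclideanSpace.inner_single_right]
          simp only [conj_trivial]
          rw [hcdef]
          rcases le_or_gt 0 (w i₀) with h | h
          · rw [if_pos h, abs_of_nonneg h]
          · rw [if_neg (not_le.mpr h), abs_of_neg h]; ring
        have hwy : (inner ℝ w y : ℝ) ≤ r * |w i₀| :=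
          inner_le_max d w y r (|w i₀|) (fun i => hi₀ i (Finset.mem_univ i)) hy1
            (by linarith) (abs_nonneg _)
        have hI : (inner ℝ w (y - a) : ℝ) ≤ 0 := by
          rw [inner_sub_right]; linarith
        -- ‖y - a‖² ≤ 4 r²
        have hna : ‖a‖ = r := by
          rw [hadef, EuclideanSpace.norm_single, hcdef]
          rw [Real.norm_eq_abs]
          rcases le_or_gt 0 (w i₀) with h | h
          · rw [if_pos h]; exact abs_of_nonneg (by linarith)
          · rw [if_neg (not_le.mpr h), abs_neg]; exact abs_of_nonneg (by linarith)
        have hQ : ‖y - a‖ ^ 2 ≤ 4 * r ^ 2 := by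
          have h1 : ‖y - a‖ ≤ 1 + r := by
            calc ‖y - a‖ ≤ ‖y‖ + ‖a‖ := norm_sub_le _ _
              _ ≤ 1 + r := by rw [hna]; linarith
          nlinarith [norm_nonneg (y - a)]
        -- expand square
        have hexp : ‖((t : ℝ) + 1)⁻¹ • ((t : ℝ) • w + (y - a))‖ ^ 2
            = ((t:ℝ)^2 * ‖w‖^2 + 2 * (t:ℝ) * (inner ℝ w (y-a) : ℝ) + ‖y - a‖^2) / ((t:ℝ)+1)^2 := by
          rw [norm_smul]
          rw [mul_pow]
          rw [@norm_add_sq_real]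
          rw [norm_smul, real_inner_smul_left]
          simp only [Real.norm_eq_abs, mul_pow, sq_abs]
          field_simp
        rw [hexp]
        rw [div_le_div_iff₀ (by positivity) (by positivity)]
        have htpos : (0:ℝ) < t := by exact_mod_cast h1
        have h4 : (t:ℝ)^2 * ‖w‖^2 ≤ (t:ℝ) * (4 * r^2) := by
          have h5 : ‖w‖^2 * (t:ℝ) ≤ 4 * r^2 := (le_div_iff₀ htpos).mp hb
          nlinarith
        have hI' : 2 * (t:ℝ) * (inner ℝ w (y - a) : ℝ) ≤ 0 :=
          mul_nonpos_of_nonneg_of_nonpos (by positivity) hI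
        calc ((t:ℝ)^2 * ‖w‖^2 + 2 * (t:ℝ) * (inner ℝ w (y-a):ℝ) + ‖y - a‖^2) * ((t:ℝ)+1)
            ≤ ((t:ℝ) * (4*r^2) + 0 + 4*r^2) * ((t:ℝ)+1) :=
              mul_le_mul_of_nonneg_right (by linarith) (by positivity)
          _ = 4 * r^2 * (((t:ℝ)+1)^2) := by ring

lemma pow_add_le (δ b : ℝ) (hδ : 0 < δ) (hb : 0 ≤ b) (d : ℕ) :
    (δ + b)^d ≤ δ^d * Real.exp ((d:ℝ) * (b/δ)) := by
  have h1 : δ + b ≤ δ * Real.exp (b/δ) := by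
    have h := Real.add_one_le_exp (b/δ)
    have h2 : δ * (b/δ + 1) ≤ δ * Real.exp (b/δ) := mul_le_mul_of_nonneg_left h hδ.le
    calc δ + b = δ * (b/δ + 1) := by field_simp; ring
      _ ≤ _ := h2
  calc (δ + b)^d ≤ (δ * Real.exp (b/δ))^d := pow_le_pow_left₀ (by positivity) h1 d
    _ = δ^d * (Real.exp (b/δ))^d := mul_pow _ _ _
    _ = δ^d * Real.exp ((d:ℝ)*(b/δ)) := by rw [← Real.exp_nat_mul]

lemma cover_vol (d k : ℕ) (δ ρ : ℝ) (hδ : 0 < δ) (hρ : 0 ≤ ρ)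
    (Z : Finset (EuclideanSpace ℝ (Fin d)))
    (hcov : Cset d k δ ⊆ ⋃ z ∈ Z, closedBall z ρ)
    (v : EuclideanSpace ℝ (Fin d)) (c : ℝ) (hc : 0 ≤ c)
    (hineq : c * ((Z.card : ℝ) * ρ ^ d) ≤ δ ^ d) :
    ENNReal.ofReal c * volume (Cset d k δ) ≤ volume (closedBall v δ) := by
  have hfin : Module.finrank ℝ (EuclideanSpace ℝ (Fin d)) = d := finrank_euclideanSpace_fin
  set V := volume (ball (0 : EuclideanSpace ℝ (Fin d)) 1) with hV
  have hball : ∀ z : EuclideanSpace ℝ (Fin d), volume (closedBall z ρ)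
      = ENNReal.ofReal (ρ ^ d) * V := by
    intro z; rw [Measure.addHaar_closedBall volume z hρ, hfin]
  have h1 : volume (Cset d k δ) ≤ (Z.card : ℝ≥0∞) * (ENNReal.ofReal (ρ ^ d) * V) := by
    calc volume (Cset d k δ) ≤ volume (⋃ z ∈ Z, closedBall z ρ) := measure_mono hcov
      _ ≤ ∑ z ∈ Z, volume (closedBall z ρ) := measure_biUnion_finset_le Z _
      _ = ∑ _z ∈ Z, ENNReal.ofReal (ρ ^ d) * V := Finset.sum_congr rfl fun z _ => hball z
      _ = (Z.card : ℝ≥0∞) * (ENNReal.ofReal (ρ ^ d) * V) := by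
          rw [Finset.sum_const, nsmul_eq_mul]
  calc ENNReal.ofReal c * volume (Cset d k δ)
      ≤ ENNReal.ofReal c * ((Z.card : ℝ≥0∞) * (ENNReal.ofReal (ρ ^ d) * V)) :=
        mul_le_mul_right h1 _
    _ = ENNReal.ofReal (c * ((Z.card : ℝ) * ρ ^ d)) * V := by
        rw [ENNReal.ofReal_mul hc, ENNReal.ofReal_mul (by positivity : (0:ℝ) ≤ (Z.card:ℝ)),
          ENNReal.ofReal_natCast, ENNReal.ofReal_pow hρ]
        ring
    _ ≤ ENNReal.ofReal (δ ^ d) * V :=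
        mul_le_mul_left (ENNReal.ofReal_le_ofReal hineq) _
    _ = volume (closedBall v δ) := by
        rw [Measure.addHaar_closedBall volume v hδ.le, hfin]

lemma abs_sum_zero {d : ℕ} (y : EuclideanSpace ℝ (Fin d)) (h : (∑ i, |y i|) ≤ 0) :
    y = 0 := by
  ext i
  have h1 := Finset.single_le_sum (f := fun i => |y i|) (fun i _ => abs_nonneg _)
    (Finset.mem_univ i)
  have h2 := abs_nonneg (y i)
  exact abs_eq_zero.mp (le_antisymm (by linarith) h2)

/-- Properties of the fattened `ℓ₁` ball: it is compact and convex, has diameter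
`O(1 + δ)`, and for every `v` with `‖v‖₂ ≤ 1`, `‖v‖₁ ≤ √k`, the ball `B(v,δ)` is
contained in `C(k,δ)` and occupies at least an
`exp(-A'(d/(δ√k) + k² log d))` fraction of its volume. -/
theorem stmt15 :
    ∃ A A' : ℝ, 0 < A ∧ 0 < A' ∧
      ∀ (d k : ℕ) (δ : ℝ), k ≤ d → 0 < δ →
        IsCompact (Cset d k δ) ∧
        Convex ℝ (Cset d k δ) ∧
        Metric.diam (Cset d k δ) ≤ A * (1 + δ) ∧
        ∀ v : EuclideanSpace ℝ (Fin d), ‖v‖ ≤ 1 → (∑ i, |v i|) ≤ Real.sqrt k →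
          Metric.closedBall v δ ⊆ Cset d k δ ∧
          ENNReal.ofReal
              (Real.exp (-(A' * ((d : ℝ) / (δ * Real.sqrt k) + (k : ℝ) ^ 2 * Real.log d))))
            * volume (Cset d k δ) ≤ volume (Metric.closedBall v δ) := by
  classical
  refine ⟨2, 3, by norm_num, by norm_num, ?_⟩
  intro d k δ hkd hδ
  set K : Set (EuclideanSpace ℝ (Fin d)) :=
    closedBall 0 1 ∩ {y | (∑ i, |y i|) ≤ Real.sqrt k} with hK
  have hcont : Continuous fun y : EuclideanSpace ℝ (Fin d) => ∑ i, |y i| :=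
    continuous_finset_sum _ fun i _ => ((EuclideanSpace.proj (𝕜 := ℝ) i).continuous).abs
  have hKc : IsCompact K :=
    (isCompact_closedBall _ _).inter_right (isClosed_le hcont continuous_const)
  have hl1conv : Convex ℝ {y : EuclideanSpace ℝ (Fin d) | (∑ i, |y i|) ≤ Real.sqrt k} := by
    intro y hy z hz a b ha hb hab
    simp only [Set.mem_setOf_eq] at *
    calc ∑ i, |(a • y + b • z) i| ≤ ∑ i, (a * |y i| + b * |z i|) := by
          refine Finset.sum_le_sum fun i _ => ?_
          have happ : (a • y + b • z) i = a * y i + b * z i := rfl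
          rw [happ]
          calc |a * y i + b * z i| ≤ |a * y i| + |b * z i| := abs_add_le _ _
            _ = a * |y i| + b * |z i| := by
                rw [abs_mul, abs_mul, abs_of_nonneg ha, abs_of_nonneg hb]
      _ = a * ∑ i, |y i| + b * ∑ i, |z i| := by
          rw [Finset.sum_add_distrib, Finset.mul_sum, Finset.mul_sum]
      _ ≤ a * Real.sqrt k + b * Real.sqrt k := by
          have h1 : 0 ≤ (∑ i, |y i|) := Finset.sum_nonneg fun i _ => abs_nonneg _
          have h2 : 0 ≤ (∑ i, |z i|) := Finset.sum_nonneg fun i _ => abs_nonneg _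
          nlinarith
      _ = Real.sqrt k := by rw [← add_mul, hab, one_mul]
  have hKconv : Convex ℝ K := (convex_closedBall _ _).inter hl1conv
  have hCeq : Cset d k δ = K + closedBall (0 : EuclideanSpace ℝ (Fin d)) δ := by
    ext x
    rw [Set.mem_add]
    constructor
    · rintro ⟨y, hy2, hy1, hxy⟩
      exact ⟨y, ⟨mem_closedBall_zero_iff.mpr hy2, hy1⟩, x - y,
        mem_closedBall_zero_iff.mpr hxy, by abel⟩
    · rintro ⟨y, ⟨hy2, hy1⟩, b, hb, rfl⟩
      exact ⟨y, mem_closedBall_zero_iff.mp hy2, hy1,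
        by simpa using mem_closedBall_zero_iff.mp hb⟩
  have hsub1 : Cset d k δ ⊆ closedBall 0 (1 + δ) := by
    rintro x ⟨y, hy2, -, hxy⟩
    rw [mem_closedBall_zero_iff]
    calc ‖x‖ = ‖(x - y) + y‖ := by rw [sub_add_cancel]
      _ ≤ ‖x - y‖ + ‖y‖ := norm_add_le _ _
      _ ≤ 1 + δ := by linarith
  have hdiam : Metric.diam (Cset d k δ) ≤ 2 * (1 + δ) := by
    calc Metric.diam (Cset d k δ)
        ≤ Metric.diam (closedBall (0 : EuclideanSpace ℝ (Fin d)) (1 + δ)) :=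
          Metric.diam_mono hsub1 isBounded_closedBall
      _ ≤ 2 * (1 + δ) := diam_closedBall (by positivity)
  refine ⟨hCeq ▸ hKc.add (isCompact_closedBall _ _),
    hCeq ▸ hKconv.add (convex_closedBall _ _), hdiam, ?_⟩
  intro v hv2 hv1
  constructor
  · intro x hx
    exact ⟨v, hv2, hv1, by rw [← dist_eq_norm]; exact mem_closedBall.mp hx⟩
  · rcases Nat.eq_zero_or_pos k with hk0 | hkpos
    · subst hk0
      have hv0 : v = 0 := abs_sum_zero v (by simpa using hv1)
      have hC : Cset d 0 δ = closedBall (0 : EuclideanSpace ℝ (Fin d)) δ := by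
        ext x
        constructor
        · rintro ⟨y, -, hy1, hxy⟩
          have hy0 : y = 0 := abs_sum_zero y (by simpa using hy1)
          rw [mem_closedBall_zero_iff]
          simpa [hy0] using hxy
        · intro hx
          exact ⟨0, by simp, by simp, by simpa using mem_closedBall_zero_iff.mp hx⟩
      rw [hC, hv0]
      simp
    · rcases eq_or_lt_of_le (show 1 ≤ k from hkpos) with hk1 | hk2
      · have hkk : k = 1 := hk1.symm
        subst hkk
        have hd : 1 ≤ d := hkd
        set T : ℝ := (d : ℝ) / (δ * Real.sqrt (1:ℕ)) + ((1:ℕ) : ℝ) ^ 2 * Real.log d with hT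
        have hsk : Real.sqrt ((1:ℕ):ℝ) = 1 := by norm_num
        have hlog : 0 ≤ Real.log d := Real.log_nonneg (by exact_mod_cast hd)
        have hdδ : 0 ≤ (d:ℝ)/δ := by positivity
        refine cover_vol d 1 δ (δ + 1) hδ (by positivity) {0} ?_ v _ (Real.exp_pos _).le ?_
        · intro x hx
          have := hsub1 hx
          simp only [Finset.mem_singleton, Set.iUnion_iUnion_eq_left]
          rw [mem_closedBall_zero_iff] at this ⊢
          linarith
        · have hN : (({0} : Finset (EuclideanSpace ℝ (Fin d))).card : ℝ) * (δ + 1)^d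
              ≤ Real.exp (3 * T) * δ^d := by
            have h1 : (δ + 1)^d ≤ δ^d * Real.exp ((d:ℝ) * (1/δ)) := pow_add_le δ 1 hδ one_pos.le d
            have h2 : (d:ℝ) * (1/δ) ≤ 3 * T := by
              rw [hT, hsk]
              have : (d:ℝ) * (1/δ) = (d:ℝ)/δ := by ring
              rw [this]
              have : (d:ℝ)/(δ * 1) = (d:ℝ)/δ := by ring_nf
              rw [this]
              nlinarith
            have h3 : Real.exp ((d:ℝ) * (1/δ)) ≤ Real.exp (3 * T) := Real.exp_le_exp.mpr h2
            have hδd : (0:ℝ) ≤ δ^d := by positivity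
            calc (({0} : Finset (EuclideanSpace ℝ (Fin d))).card : ℝ) * (δ + 1)^d
                = (δ + 1)^d := by simp
              _ ≤ δ^d * Real.exp (3 * T) := h1.trans (by nlinarith [Real.exp_pos ((d:ℝ)*(1/δ))])
              _ = Real.exp (3 * T) * δ^d := mul_comm _ _
          calc Real.exp (-(3*T)) * ((({0} : Finset (EuclideanSpace ℝ (Fin d))).card : ℝ) * (δ + 1)^d)
              ≤ Real.exp (-(3*T)) * (Real.exp (3*T) * δ^d) :=
                mul_le_mul_of_nonneg_left hN (Real.exp_pos _).le
            _ = δ^d := by rw [← mul_assoc, ← Real.exp_add]; simp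
      · have hk2' : 2 ≤ k := hk2
        set T : ℝ := (d : ℝ) / (δ * Real.sqrt k) + (k : ℝ) ^ 2 * Real.log d with hT
        have hd2 : 2 ≤ d := le_trans hk2 hkd
        have hd0 : 0 < d := by omega
        have hk1R : (1:ℝ) ≤ (k:ℝ) := by exact_mod_cast (by omega : 1 ≤ k)
        have hdpos : (0:ℝ) < d := by exact_mod_cast hd0
        have hlog : 0 ≤ Real.log d := Real.log_nonneg (by exact_mod_cast (by omega : 1 ≤ d))
        set r : ℝ := Real.sqrt k with hrdef
        have hr : 1 ≤ r := Real.one_le_sqrt.mpr hk1R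
        have hrpos : 0 < r := lt_of_lt_of_le one_pos hr
        have hr2 : r ^ 2 = (k:ℝ) := Real.sq_sqrt (by positivity)
        set m : ℕ := k ^ 2 with hmdef
        have hm1 : 1 ≤ m := Nat.one_le_iff_ne_zero.mpr (by positivity)
        set S : Finset (EuclideanSpace ℝ (Fin d)) :=
          insert 0 ((Finset.image (fun i => EuclideanSpace.single i r) Finset.univ) ∪
            (Finset.image (fun i => EuclideanSpace.single i (-r)) Finset.univ)) with hSdef
        set Z : Finset (EuclideanSpace ℝ (Fin d)) :=
          (Fintype.piFinset fun _ : Fin m => S).image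
            (fun f => ((m:ℕ) : ℝ)⁻¹ • ∑ j, f j) with hZdef
        set ρ : ℝ := δ + 2 / r with hρdef
        refine cover_vol d k δ ρ hδ (by positivity) Z ?_ v _ (Real.exp_pos _).le ?_
        · -- covering
          rintro x ⟨y, hy2, hy1, hxy⟩
          obtain ⟨s, hsS, hsn⟩ := fw d hd0 r hr y hy2 hy1 m hm1
          set z : EuclideanSpace ℝ (Fin d) := ((m:ℕ) : ℝ)⁻¹ • ∑ j, s j with hzd
          have hzZ : z ∈ Z := by
            rw [hZdef]
            refine Finset.mem_image.mpr ⟨s, ?_, rfl⟩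
            rw [Fintype.mem_piFinset]
            intro j
            rcases hsS j with h | ⟨i, c, hc, h⟩
            · rw [h, hSdef]; exact Finset.mem_insert_self _ _
            · rw [h, hSdef]
              refine Finset.mem_insert_of_mem (Finset.mem_union.mpr ?_)
              rcases hc with rfl | rfl
              · exact Or.inl (Finset.mem_image.mpr ⟨i, Finset.mem_univ i, rfl⟩)
              · exact Or.inr (Finset.mem_image.mpr ⟨i, Finset.mem_univ i, rfl⟩)
          have hyz : ‖y - z‖ ≤ 2 / r := by
            have h1 : ‖y - z‖ ^ 2 ≤ 4 * r ^ 2 / (m:ℝ) := hsn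
            have h2 : 4 * r ^ 2 / ((m:ℕ):ℝ) = (2 / r) ^ 2 := by
              rw [hmdef]
              push_cast
              rw [div_pow]
              rw [hr2]
              field_simp
              ring
            rw [h2] at h1
            nlinarith [norm_nonneg (y - z), div_pos two_pos hrpos]
          refine Set.mem_biUnion hzZ ?_
          rw [mem_closedBall, dist_eq_norm]
          calc ‖x - z‖ = ‖(x - y) + (y - z)‖ := by abel_nf
            _ ≤ ‖x - y‖ + ‖y - z‖ := norm_add_le _ _
            _ ≤ δ + 2 / r := add_le_add hxy hyz
        · -- counting inequality
          have hScard : S.card ≤ 2 * d + 1 := by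
            have h1 := Finset.card_insert_le (0 : EuclideanSpace ℝ (Fin d))
              ((Finset.image (fun i => EuclideanSpace.single i r) Finset.univ) ∪
                (Finset.image (fun i => EuclideanSpace.single i (-r)) Finset.univ))
            have h2 := Finset.card_union_le
              (Finset.image (fun i => EuclideanSpace.single i r) (Finset.univ : Finset (Fin d)))
              (Finset.image (fun i => EuclideanSpace.single i (-r)) Finset.univ)
            have h3 := Finset.card_image_le (f := fun i => EuclideanSpace.single i r)
              (s := (Finset.univ : Finset (Fin d)))
            have h4 := Finset.card_image_le (f := fun i => EuclideanSpace.single i (-r))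
              (s := (Finset.univ : Finset (Fin d)))
            simp only [Finset.card_univ, Fintype.card_fin] at h3 h4
            rw [hSdef]
            omega
          have hZcard : Z.card ≤ (2 * d + 1) ^ m := by
            calc Z.card ≤ (Fintype.piFinset fun _ : Fin m => S).card := Finset.card_image_le
              _ = S.card ^ m := by
                  rw [Fintype.card_piFinset]
                  simp [Finset.prod_const]
              _ ≤ (2 * d + 1) ^ m := Nat.pow_le_pow_left hScard m
          have hNle : (Z.card : ℝ) ≤ Real.exp (3 * ((k:ℝ)^2 * Real.log d)) := by
            have h1 : (Z.card : ℝ) ≤ ((2 * d + 1 : ℕ) : ℝ) ^ m := by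
              exact_mod_cast Nat.cast_le.mpr hZcard
            have h2 : ((2 * d + 1 : ℕ) : ℝ) ≤ (d:ℝ) ^ 3 := by
              push_cast
              have hdd : (2:ℝ) ≤ (d:ℝ) := by exact_mod_cast hd2
              have h5 : 0 ≤ ((d:ℝ) - 2) * (d:ℝ)^2 := mul_nonneg (by linarith) (by positivity)
              have h6 : (4:ℝ) ≤ (d:ℝ)^2 := by nlinarith
              nlinarith
            have h3 : ((2 * d + 1 : ℕ) : ℝ) ^ m ≤ ((d:ℝ) ^ 3) ^ m :=
              pow_le_pow_left₀ (by positivity) h2 m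
            have h4 : ((d:ℝ) ^ 3) ^ m = Real.exp (3 * ((k:ℝ)^2 * Real.log d)) := by
              have he : Real.exp (Real.log d) = (d:ℝ) := Real.exp_log hdpos
              have h5 : (d:ℝ) ^ 3 = Real.exp ((3:ℕ) * Real.log d) := by
                rw [Real.exp_nat_mul, he]
              rw [h5, ← Real.exp_nat_mul]
              congr 1
              rw [hmdef]
              push_cast
              ring
            linarith [h1.trans h3]
          have hρle : ρ ^ d ≤ δ ^ d * Real.exp (3 * ((d:ℝ) / (δ * r))) := by
            have h1 := pow_add_le δ (2 / r) hδ (by positivity) d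
            refine h1.trans (mul_le_mul_of_nonneg_left (Real.exp_le_exp.mpr ?_) (by positivity))
            have h2 : (d:ℝ) * ((2 / r) / δ) = 2 * ((d:ℝ) / (δ * r)) := by
              field_simp
            rw [h2]
            have h3 : 0 ≤ (d:ℝ) / (δ * r) := by positivity
            linarith
          have hN : (Z.card : ℝ) * ρ ^ d ≤ Real.exp (3 * T) * δ ^ d := by
            have h0 : (0:ℝ) ≤ ρ ^ d := by positivity
            calc (Z.card : ℝ) * ρ ^ d
                ≤ Real.exp (3 * ((k:ℝ)^2 * Real.log d)) * (δ ^ d * Real.exp (3 * ((d:ℝ)/(δ*r)))) := by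
                  have := mul_le_mul hNle hρle h0 (Real.exp_pos _).le
                  exact this
              _ = (Real.exp (3 * ((k:ℝ)^2 * Real.log d)) * Real.exp (3 * ((d:ℝ)/(δ*r)))) * δ ^ d := by
                  ring
              _ = Real.exp (3 * T) * δ ^ d := by
                  rw [← Real.exp_add, hT, hrdef]
                  ring_nf
          calc Real.exp (-(3*T)) * ((Z.card : ℝ) * ρ ^ d)
              ≤ Real.exp (-(3*T)) * (Real.exp (3*T) * δ^d) :=
                mul_le_mul_of_nonneg_left hN (Real.exp_pos _).le
            _ = δ^d := by rw [← mul_assoc, ← Real.exp_add]; simp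
end
end

section
/- Let μ, x ∈ ℝ^d with x ≠ μ, let 0 < c ≤ 0.1, let g ∈ ℝ^d satisfy ‖g − (μ − x)/‖μ − x‖₂‖₂ ≤ 0.01, and let t ∈ ℝ satisfy (1−c)·‖μ − x‖₂ ≤ t ≤ (1+c)·‖μ − x‖₂. Then the updated point x̄ = x + t·g satisfies ‖x̄ − μ‖₂ ≤ (1.01·c + 0.01)·‖x − μ‖₂. -/
noncomputable section

/-- Per-iteration contraction of the gradient-descent mean-estimation step (step size 1):
if `g` is within `0.01` of the unit vector pointing from `x` to `μ` and
`t ∈ [(1-c)‖μ-x‖, (1+c)‖μ-x‖]` with `0 < c ≤ 0.1`, then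
`‖(x + t·g) - μ‖₂ ≤ (1.01c + 0.01)·‖x - μ‖₂`. -/
theorem stmt17 {d : ℕ} (μ x g : EuclideanSpace ℝ (Fin d)) (hne : x ≠ μ)
    (c t : ℝ) (hc : 0 < c) (hc' : c ≤ 0.1)
    (hg : ‖g - ‖μ - x‖⁻¹ • (μ - x)‖ ≤ 0.01)
    (ht1 : (1 - c) * ‖μ - x‖ ≤ t) (ht2 : t ≤ (1 + c) * ‖μ - x‖) :
    ‖(x + t • g) - μ‖ ≤ (1.01 * c + 0.01) * ‖x - μ‖ := by
  set r := ‖μ - x‖ with hrdef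
  have hr : 0 < r := by
    simpa [hrdef] using norm_pos_iff.mpr (sub_ne_zero.mpr (Ne.symm hne))
  have ht0 : 0 ≤ t := le_trans (by nlinarith) ht1
  have key : (x + t • g) - μ = t • (g - r⁻¹ • (μ - x)) + (t * r⁻¹ - 1) • (μ - x) := by
    rw [smul_sub, sub_smul, mul_smul, one_smul]
    abel
  have h1 : ‖(x + t • g) - μ‖ ≤ t * 0.01 + |t - r| := by
    rw [key]
    calc ‖t • (g - r⁻¹ • (μ - x)) + (t * r⁻¹ - 1) • (μ - x)‖
        ≤ ‖t • (g - r⁻¹ • (μ - x))‖ + ‖(t * r⁻¹ - 1) • (μ - x)‖ := norm_add_le _ _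
      _ = |t| * ‖g - r⁻¹ • (μ - x)‖ + |t * r⁻¹ - 1| * r := by
          rw [norm_smul, norm_smul, Real.norm_eq_abs, Real.norm_eq_abs]
      _ ≤ t * 0.01 + |t - r| := by
          have : |t * r⁻¹ - 1| * r = |t - r| := by
            have h2 : t * r⁻¹ - 1 = (t - r) / r := by field_simp
            rw [h2, abs_div, abs_of_pos hr, div_mul_cancel₀ _ hr.ne']
          rw [this, abs_of_nonneg ht0]
          have := mul_le_mul_of_nonneg_left hg ht0
          linarith
  have habs : |t - r| ≤ c * r := by
    rw [abs_le]; constructor <;> nlinarith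
  have hxm : ‖x - μ‖ = r := by rw [hrdef, ← norm_neg, neg_sub]
  rw [hxm]
  nlinarith
end
end
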